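/- Let G be a finite simple graph and e an edge of the complement of G. Then γ*_{rk}(G) − k ≤ γ*_{rk}(G + e) ≤ γ*_{rk}(G) + 1, where G + e denotes the graph obtained from G by adding the edge e. -/

import Mathlib

/-!
The middle graph `M(G)` is the subgraph of `M(G + ab)` induced by all vertices except the new
edge vertex `ab`. Extending an optimal rainbow dominating function of `M(G)` by one colour on
`ab` costs `1`. Conversely, restrict an optimal one of `M(G + ab)`, move the colours of `ab`
onto `a` and give `b` all `k` colours: every neighbour of `ab` in `M(G + ab)` is `a`, `b`, or an
edge of `G` through `a` or `b`, so it stays dominated, and the weight grows by at most `k`.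
-/

open SimpleGraph Finset

/-- A `k`-rainbow dominating function on a graph `H`. -/
def IsRDF {W : Type*} (H : SimpleGraph W) (k : ℕ) (f : W → Finset (Fin k)) : Prop :=
  ∀ w, f w = ∅ → ∀ c : Fin k, ∃ u, H.Adj w u ∧ c ∈ f u

/-- The weight of a rainbow dominating function. -/
noncomputable def rdfWeight {W : Type*} [Fintype W] {k : ℕ} (f : W → Finset (Fin k)) : ℕ :=
  ∑ w, (f w).card

/-- The `k`-rainbow domination number of a graph. -/
noncomputable def rdn {W : Type*} [Fintype W] (H : SimpleGraph W) (k : ℕ) : ℕ :=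
  sInf {n | ∃ f : W → Finset (Fin k), IsRDF H k f ∧ rdfWeight f = n}

/-- The middle graph of `G`, on vertex set `V(G) ⊕ E(G)`. -/
def middleGraph {V : Type*} (G : SimpleGraph V) : SimpleGraph (V ⊕ G.edgeSet) where
  Adj x y :=
    match x, y with
    | Sum.inl _, Sum.inl _ => False
    | Sum.inl v, Sum.inr e => v ∈ (e : Sym2 V)
    | Sum.inr e, Sum.inl v => v ∈ (e : Sym2 V)
    | Sum.inr e, Sum.inr f => e ≠ f ∧ ∃ v, v ∈ (e : Sym2 V) ∧ v ∈ (f : Sym2 V)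
  symm := by
    constructor
    rintro (v | e) (w | f) h
    · exact h.elim
    · exact h
    · exact h
    · exact ⟨Ne.symm h.1, h.2.imp fun v hv => ⟨hv.2, hv.1⟩⟩
  loopless := by
    constructor
    rintro (v | e) h
    · exact h.elim
    · exact h.1 rfl

/-- The middle `k`-rainbow domination number `γ*_{rk}(G)`. -/
noncomputable def mrdn {V : Type*} [Fintype V] (G : SimpleGraph V) (k : ℕ) : ℕ :=
  letI := Classical.decEq V
  letI : DecidableRel G.Adj := fun _ _ => Classical.dec _
  rdn (middleGraph G) k

/-- The `k`-rainbow domatic number: the maximum size of a family of `k`-rainbow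
dominating functions with `∑ i |f i v| ≤ k` for each vertex `v`. -/
noncomputable def rdomatic {W : Type*} (H : SimpleGraph W) (k : ℕ) : ℕ :=
  sSup {d | ∃ F : Fin d → W → Finset (Fin k), Function.Injective F ∧
    (∀ i, IsRDF H k (F i)) ∧ ∀ w, (∑ i, (F i w).card) ≤ k}

/-- The matching number `α'(G)`. -/
noncomputable def matchingNumber {V : Type*} [Fintype V] (G : SimpleGraph V) : ℕ :=
  sSup {n | ∃ M : Finset (Sym2 V), ↑M ⊆ G.edgeSet ∧
    (∀ e ∈ M, ∀ f ∈ M, e ≠ f → ∀ v : V, ¬(v ∈ e ∧ v ∈ f)) ∧ M.card = n}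

section RainbowDomination

variable {W : Type*} {H : SimpleGraph W} {k : ℕ}

theorem isRDF_const_univ : IsRDF H k fun _ => univ :=
  fun _ hw c => absurd (hw ▸ mem_univ c) (notMem_empty c)

variable [Fintype W]

theorem rdn_le_rdfWeight {f : W → Finset (Fin k)} (hf : IsRDF H k f) : rdn H k ≤ rdfWeight f :=
  Nat.sInf_le ⟨f, hf, rfl⟩

theorem exists_isRDF_rdfWeight_eq_rdn : ∃ f, IsRDF H k f ∧ rdfWeight f = rdn H k :=
  Nat.sInf_mem (s := {n | ∃ f, IsRDF H k f ∧ rdfWeight f = n}) ⟨_, _, isRDF_const_univ, rfl⟩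

theorem rdn_zero : rdn H 0 = 0 :=
  Nat.eq_zero_of_le_zero <| (rdn_le_rdfWeight (f := fun _ => ∅) fun _ _ c => c.elim0).trans_eq
    (by simp [rdfWeight])

end RainbowDomination

theorem Fintype.sum_eq_sum_comp_add_of_range_eq_compl {W W' M : Type*} [Fintype W] [Fintype W']
    [AddCommMonoid M] {φ : W → W'} (hφ : Function.Injective φ) {x : W'}
    (hx : Set.range φ = {x}ᶜ) (g : W' → M) : ∑ w', g w' = ∑ w, g (φ w) + g x := by
  classical
  have hmap : ({x}ᶜ : Finset W') = univ.map ⟨φ, hφ⟩ := by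
    ext w'
    simp [← Set.mem_compl_singleton_iff, ← hx]
  rw [Fintype.sum_eq_add_sum_compl x, add_comm, hmap, Finset.sum_map]
  rfl

section OneVertexExtension

variable {W W' : Type*} [Fintype W] [Fintype W'] {H : SimpleGraph W} {H' : SimpleGraph W'}
  {x : W'}

theorem rdn_le_rdn_add_one_of_hom (φ : H →g H') (hφ : Function.Injective φ)
    (hx : Set.range φ = {x}ᶜ) (k : ℕ) : rdn H' k ≤ rdn H k + 1 := by
  obtain _ | k := k
  · simp [rdn_zero]
  obtain ⟨f, hf, hwf⟩ := exists_isRDF_rdfWeight_eq_rdn (H := H) (k := k + 1)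
  let f' : W' → Finset (Fin (k + 1)) := Function.extend φ f fun _ => {0}
  have hf' : ∀ w, f' (φ w) = f w := hφ.extend_apply f _
  have hf'x : f' x = {0} := Function.extend_apply' _ _ _ (show x ∉ Set.range φ by simp [hx])
  have hrdf : IsRDF H' (k + 1) f' := by
    intro w' hw' c
    by_cases hw : ∃ w, φ w = w'
    · obtain ⟨w, rfl⟩ := hw
      obtain ⟨u, hwu, hc⟩ := hf w ((hf' w).symm.trans hw') c
      exact ⟨φ u, φ.map_adj hwu, (hf' u).symm ▸ hc⟩
    · simp [f', Function.extend_apply' _ _ _ hw] at hw'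
  calc rdn H' (k + 1) ≤ rdfWeight f' := rdn_le_rdfWeight hrdf
    _ = rdn H (k + 1) + 1 := by
      rw [rdfWeight, Fintype.sum_eq_sum_comp_add_of_range_eq_compl hφ hx, ← hwf]
      simp [hf', hf'x, rdfWeight]

theorem rdn_le_rdn_add_of_embedding (φ : H ↪g H') (hx : Set.range φ = {x}ᶜ) (a b : W)
    (hcover : ∀ w, H'.Adj (φ w) x → w = a ∨ H.Adj w a ∨ w = b ∨ H.Adj w b) (k : ℕ) :
    rdn H k ≤ rdn H' k + k := by
  classical
  obtain ⟨f', hf', hwf'⟩ := exists_isRDF_rdfWeight_eq_rdn (H := H') (k := k)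
  let f : W → Finset (Fin k) := fun w =>
    f' (φ w) ∪ (if w = a then f' x else ∅) ∪ (if w = b then univ else ∅)
  have hrdf : IsRDF H k f := by
    intro w hw c
    simp only [f, union_eq_empty] at hw
    obtain ⟨⟨hφw, ha⟩, hb⟩ := hw
    obtain ⟨u', hwu, hc⟩ := hf' (φ w) hφw c
    by_cases hu : u' = x
    · subst hu
      rcases hcover w hwu with rfl | hwa | rfl | hwb
      · rw [if_pos rfl] at ha
        simp [ha] at hc
      · exact ⟨a, hwa, by simp [f, hc]⟩
      · rw [if_pos rfl] at hb
        exact absurd (hb ▸ mem_univ c) (notMem_empty c)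
      · exact ⟨b, hwb, by simp [f]⟩
    · obtain ⟨u, rfl⟩ : u' ∈ Set.range φ := hx ▸ hu
      exact ⟨u, φ.map_adj_iff.1 hwu, by simp [f, hc]⟩
  have hcard : ∀ w, (f w).card ≤
      (f' (φ w)).card + (if w = a then (f' x).card else 0) + (if w = b then k else 0) := by
    intro w
    refine (card_union_le _ _).trans (add_le_add ((card_union_le _ _).trans ?_) ?_) <;>
      split_ifs <;> simp
  calc rdn H k ≤ rdfWeight f := rdn_le_rdfWeight hrdf
    _ ≤ ∑ w, ((f' (φ w)).card + (if w = a then (f' x).card else 0) + (if w = b then k else 0)) :=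
      sum_le_sum fun w _ => hcard w
    _ = rdn H' k + k := by
      rw [← hwf', rdfWeight, Fintype.sum_eq_sum_comp_add_of_range_eq_compl φ.injective hx]
      simp [sum_add_distrib]

end OneVertexExtension

section MiddleGraph

variable {V : Type*}

@[simps]
def middleGraphEmbedding {G G' : SimpleGraph V} (h : G ≤ G') :
    middleGraph G ↪g middleGraph G' where
  toFun := Sum.map id (Set.inclusion (edgeSet_mono h))
  inj' := Sum.map_injective.2 ⟨Function.injective_id, Set.inclusion_injective _⟩
  map_rel_iff' := by
    rintro (v | e) (w | f) <;> simp [middleGraph, Subtype.ext_iff]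

variable {G : SimpleGraph V} {a b : V}

theorem range_middleGraphEmbedding_sup_edge (hab : a ≠ b) (hnadj : ¬ G.Adj a b) :
    Set.range (middleGraphEmbedding (le_sup_left : G ≤ G ⊔ fromEdgeSet {s(a, b)})) =
      {Sum.inr ⟨s(a, b), by simp [hab]⟩}ᶜ := by
  ext (v | ⟨f, hf⟩)
  · simp
  · have hfG : f ∈ G.edgeSet ↔ f ≠ s(a, b) :=
      ⟨fun hfG hfe => hnadj (by rwa [hfe] at hfG), fun hfe => by simpa [hfe] using hf⟩
    simpa [Subtype.ext_iff] using hfG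

theorem eq_or_adj_of_adj_middleGraph_sup_edge (hab : a ≠ b) (w : V ⊕ G.edgeSet)
    (hw : (middleGraph (G ⊔ fromEdgeSet {s(a, b)})).Adj
      (middleGraphEmbedding le_sup_left w) (Sum.inr ⟨s(a, b), by simp [hab]⟩)) :
    w = Sum.inl a ∨ (middleGraph G).Adj w (Sum.inl a) ∨
      w = Sum.inl b ∨ (middleGraph G).Adj w (Sum.inl b) := by
  rcases w with v | ⟨f, hf⟩
  · simp only [middleGraphEmbedding_apply, Sum.map_inl] at hw
    simpa [middleGraph] using hw
  · simp only [middleGraphEmbedding_apply, Sum.map_inr] at hw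
    obtain ⟨-, v, hvf, hv⟩ := hw
    rcases Sym2.mem_iff.1 hv with rfl | rfl
    · exact .inr (.inl hvf)
    · exact .inr (.inr (.inr hvf))

end MiddleGraph

/-- For an edge `e` of the complement of `G`,
`γ*_{rk}(G) − k ≤ γ*_{rk}(G + e) ≤ γ*_{rk}(G) + 1`. -/
theorem stmt3 {V : Type*} [Fintype V] (G : SimpleGraph V) (k : ℕ) (e : Sym2 V)
    (he : e ∈ Gᶜ.edgeSet) :
    mrdn G k - k ≤ mrdn (G ⊔ fromEdgeSet {e}) k ∧
    mrdn (G ⊔ fromEdgeSet {e}) k ≤ mrdn G k + 1 := by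
  induction e using Sym2.ind with | _ a b => ?_
  obtain ⟨hab, hnadj⟩ := (mem_edgeSet _).1 he
  have hrange := range_middleGraphEmbedding_sup_edge hab hnadj
  classical
  have hdown := rdn_le_rdn_add_of_embedding _ hrange (.inl a) (.inl b)
    (eq_or_adj_of_adj_middleGraph_sup_edge hab) k
  have hup := rdn_le_rdn_add_one_of_hom (middleGraphEmbedding le_sup_left).toHom
    (RelEmbedding.injective _) hrange k
  -- `mrdn` builds its `Fintype` instances from classical decidability; `convert` identifies them.
  unfold mrdn
  constructor
  · convert Nat.sub_le_iff_le_add.2 hdown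
  · convert hup
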